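/- arXiv:1208.3752 — 8 statements merged into one kernel-verified Lean document; each statement's English description precedes it below -/
import Mathlib

section
/- Let k_1,...,k_{N_1} ∈ ℂ and b ∈ ℂ with k_i + b ≠ 0 for all i, let Γ_D = Diag(k_1,...,k_{N_1}), and let Γ_J(b) be the N_2×N_2 lower Jordan block with b on the diagonal and 1 on the subdiagonal. Then the N_1×N_2 matrix G with entries G_{ij} = -(-1/(k_i+b))^j satisfies G Γ_J(b)^T + Γ_D G = 𝟙_D · e_1^T, where 𝟙_D = (1,...,1)^T of length N_1 and e_1 = (1,0,...,0)^T of length N_2. -/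
/-!
Right multiplication by `Γ_J(b)ᵀ` sends column `j` of `G` to `b` times itself plus column `j - 1`,
so entry `(i, j)` of the left-hand side is `(k_i + b) G_{ij} + G_{i,j-1}`. With `x = -1/(k_i + b)`
we have `(k_i + b) G_{ij} = x^j`, while `G_{i,j-1} = -x^j` for `j ≥ 1`: the two cancel except in
the first column, where only `x^0 = 1` survives.
-/

open Matrix

/-- The N×N lower Jordan block with `a` on the diagonal and 1 on the subdiagonal. -/
def jordanBlock (N : ℕ) (a : ℂ) : Matrix (Fin N) (Fin N) ℂ :=
  Matrix.of fun i j => if (i : ℕ) = j then a else if (i : ℕ) = (j : ℕ) + 1 then 1 else 0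

lemma jordanBlock_apply_eq_add {N : ℕ} (a : ℂ) (i j : Fin N) :
    jordanBlock N a i j =
      (if i = j then a else 0) + if (i : ℕ) = (j : ℕ) + 1 then 1 else 0 := by
  simp only [jordanBlock, of_apply, Fin.ext_iff]
  split_ifs <;> first | omega | simp

lemma Fin.sum_ite_val_eq_add_one {M : Type*} [AddCommMonoid M] {N : ℕ} (g : Fin N → M)
    (j : Fin N) :
    (∑ l : Fin N, if (j : ℕ) = (l : ℕ) + 1 then g l else 0) =
      if h : (j : ℕ) = 0 then 0 else g ⟨j - 1, by omega⟩ := by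
  obtain ⟨_ | n, hn⟩ := j
  · simp
  · rw [Finset.sum_eq_single ⟨n, by omega⟩ (by simp +contextual [Fin.ext_iff, eq_comm])
      (by simp)]
    simp

lemma of_mul_jordanBlock_transpose_apply {m : Type*} {N : ℕ} (f : m → ℕ → ℂ) (a : ℂ)
    (i : m) (j : Fin N) :
    ((of fun i (l : Fin N) => f i l) * (jordanBlock N a)ᵀ) i j =
      a * f i j + if (j : ℕ) = 0 then 0 else f i (j - 1) := by
  simp only [mul_apply, transpose_apply, of_apply, jordanBlock_apply_eq_add, mul_add,
    Finset.sum_add_distrib, mul_ite, mul_zero, mul_one, Finset.sum_ite_eq, Finset.mem_univ,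
    if_true, Fin.sum_ite_val_eq_add_one, mul_comm (f i _) a]
  split_ifs <;> rfl

lemma neg_pow_succ_mul_eq_pow {K : Type*} [Field K] {c : K} (hc : c ≠ 0) (n : ℕ) :
    -((-1 / c) ^ (n + 1)) * c = (-1 / c) ^ n := by
  rw [pow_succ]
  field_simp

/-- The N₁×N₂ matrix G with entries G_{ij} = -(-1/(k_i+b))^j (1-based j)
satisfies G Γ_J(b)ᵀ + Γ_D G = 𝟙_D e₁ᵀ. -/
theorem cauchy_elementary_diag_jordan (N₁ N₂ : ℕ) (k : Fin N₁ → ℂ) (b : ℂ)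
    (hk : ∀ i, k i + b ≠ 0) :
    let G : Matrix (Fin N₁) (Fin N₂) ℂ :=
      Matrix.of fun i j => -((-1 / (k i + b)) ^ ((j : ℕ) + 1))
    G * (jordanBlock N₂ b)ᵀ + Matrix.diagonal k * G
      = Matrix.of fun (_ : Fin N₁) (j : Fin N₂) => if (j : ℕ) = 0 then (1 : ℂ) else 0 := by
  ext i j
  have hG := neg_pow_succ_mul_eq_pow (hk i)
  rw [Matrix.add_apply,
    of_mul_jordanBlock_transpose_apply (fun i n => -((-1 / (k i + b)) ^ (n + 1))),
    diagonal_mul, of_apply, of_apply]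
  obtain ⟨_ | n, -⟩ := j
  · simp only [if_true]
    linear_combination hG 0
  · simp only [Nat.add_one_sub_one, Nat.add_one_ne_zero, if_false]
    linear_combination hG (n + 1)
end

section
/- Let M, K be N×N matrices and r, c^T vectors with (pI - K)(I + M̃) = (I + M)(pI - K) + r c^T, where I + M and I + M̃ and pI ± K are invertible, and (pI - K) r̃ = (pI + K) r. Define u^{(i)} = (I+M)^{-1} K^i r, ũ^{(i)} = (I+M̃)^{-1} K^i r̃, S^{(i,0)} = c^T u^{(i)}, S̃^{(i,0)} = c^T ũ^{(i)}. Then (pI - K) ũ^{(i)} = p u^{(i)} + u^{(i+1)} - S̃^{(i,0)} u^{(0)}. -/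
open Matrix

/-- Shift relation for the auxiliary vectors u^{(i)} = (I+M)⁻¹ Kⁱ r:
(pI-K) ũ^{(i)} = p u^{(i)} + u^{(i+1)} - S̃^{(i,0)} u^{(0)}. -/
theorem u_shift_relation (N : ℕ) (p : ℂ)
    (K M Mt : Matrix (Fin N) (Fin N) ℂ) (r rt c : Fin N → ℂ)
    (hM : IsUnit (1 + M)) (hMt : IsUnit (1 + Mt))
    (hinvm : IsUnit (p • (1 : Matrix (Fin N) (Fin N) ℂ) - K))
    (hinvp : IsUnit (p • (1 : Matrix (Fin N) (Fin N) ℂ) + K))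
    (hexch : (p • (1 : Matrix (Fin N) (Fin N) ℂ) - K) * (1 + Mt)
        = (1 + M) * (p • (1 : Matrix (Fin N) (Fin N) ℂ) - K) + vecMulVec r c)
    (hr : (p • (1 : Matrix (Fin N) (Fin N) ℂ) - K).mulVec rt
        = (p • (1 : Matrix (Fin N) (Fin N) ℂ) + K).mulVec r)
    (u ut : ℕ → Fin N → ℂ)
    (hu : ∀ i, u i = (1 + M)⁻¹.mulVec ((K ^ i).mulVec r))
    (hut : ∀ i, ut i = (1 + Mt)⁻¹.mulVec ((K ^ i).mulVec rt)) :
    ∀ i : ℕ, (p • (1 : Matrix (Fin N) (Fin N) ℂ) - K).mulVec (ut i)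
      = p • u i + u (i + 1) - (c ⬝ᵥ ut i) • u 0 := by
  intro i
  set A : Matrix (Fin N) (Fin N) ℂ := p • 1 - K with hAdef
  set B : Matrix (Fin N) (Fin N) ℂ := p • 1 + K with hBdef
  have hMdet : IsUnit (1 + M).det := (Matrix.isUnit_iff_isUnit_det _).mp hM
  have hMtdet : IsUnit (1 + Mt).det := (Matrix.isUnit_iff_isUnit_det _).mp hMt
  have hcomm : Commute A (K ^ i) :=
    (((Commute.one_left K).smul_left p).sub_left (Commute.refl K)).pow_right i
  have hvec : ∀ v : Fin N → ℂ, (vecMulVec r c).mulVec v = (c ⬝ᵥ v) • r := by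
    intro v
    funext j
    simp only [Matrix.mulVec, Matrix.vecMulVec_apply, dotProduct,
      Pi.smul_apply, smul_eq_mul, Finset.sum_mul, Finset.mul_sum]
    apply Finset.sum_congr rfl
    intros; ring
  -- matrix identity
  have hmat : (1 + M) * (A * ((1 + Mt)⁻¹ * K ^ i))
      = K ^ i * A - vecMulVec r c * ((1 + Mt)⁻¹ * K ^ i) := by
    have h1 : (1 + M) * A = A * (1 + Mt) - vecMulVec r c := by
      rw [hexch, add_sub_cancel_right]
    rw [← mul_assoc, h1, sub_mul, mul_assoc A, ← mul_assoc (1 + Mt),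
      Matrix.mul_nonsing_inv _ hMtdet, one_mul, hcomm.eq]
  have key : (1 + M).mulVec (A.mulVec (ut i))
      = (K ^ i).mulVec (B.mulVec r) - (c ⬝ᵥ ut i) • r := by
    have hut' : ut i = ((1 + Mt)⁻¹ * K ^ i).mulVec rt := by
      rw [hut i, Matrix.mulVec_mulVec]
    rw [hut', Matrix.mulVec_mulVec, Matrix.mulVec_mulVec, mul_assoc, hmat,
      Matrix.sub_mulVec, ← Matrix.mulVec_mulVec rt (K ^ i) A, hr,
      ← Matrix.mulVec_mulVec rt (vecMulVec r c), hvec]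
  have hlhs : A.mulVec (ut i)
      = (1 + M)⁻¹.mulVec ((K ^ i).mulVec (B.mulVec r) - (c ⬝ᵥ ut i) • r) := by
    rw [← key, Matrix.mulVec_mulVec, Matrix.nonsing_inv_mul _ hMdet, Matrix.one_mulVec]
  have harg : (K ^ i).mulVec (B.mulVec r) = p • ((K ^ i).mulVec r) + (K ^ (i + 1)).mulVec r := by
    rw [Matrix.mulVec_mulVec, hBdef, mul_add, mul_smul_comm, mul_one, ← pow_succ,
      Matrix.add_mulVec, Matrix.smul_mulVec]
  rw [hlhs, hu, hu, hu, pow_zero, Matrix.one_mulVec, harg, Matrix.mulVec_sub,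
    Matrix.mulVec_add, Matrix.mulVec_smul, Matrix.mulVec_smul]
end

section
/- Let Γ = Diag(k_1,...,k_N) with k_i + k_j ≠ 0, F = Diag(ρ_1,...,ρ_N), H = Diag(c_1,...,c_N), G the Cauchy matrix G_{ij} = 1/(k_i+k_j), M = F G H, r = F𝟙, c^T = 𝟙^T H with 𝟙 the all-ones vector. If I + M and (HF)^{-1} + G are invertible (with all ρ_i c_i ≠ 0), then S^{(i,j)} := c^T Γ^j (I+M)^{-1} Γ^i r satisfies S^{(i,j)} = S^{(j,i)} for all integers i, j ≥ 0. -/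
open Matrix

/-- Symmetry S^{(i,j)} = S^{(j,i)} in the diagonal case: Γ = Diag(k),
M = F G H with F = Diag(ρ), H = Diag(c), G the symmetric Cauchy matrix,
r = F 𝟙, cᵀ = 𝟙ᵀ H. -/
theorem S_symmetric_diagonal (N : ℕ) (k ρ c : Fin N → ℂ)
    (hk : ∀ i j, k i + k j ≠ 0) (hρc : ∀ i, ρ i * c i ≠ 0) :
    let Γ : Matrix (Fin N) (Fin N) ℂ := Matrix.diagonal k
    let F : Matrix (Fin N) (Fin N) ℂ := Matrix.diagonal ρ
    let H : Matrix (Fin N) (Fin N) ℂ := Matrix.diagonal c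
    let G : Matrix (Fin N) (Fin N) ℂ := Matrix.of fun i j => 1 / (k i + k j)
    let M : Matrix (Fin N) (Fin N) ℂ := F * G * H
    let r : Fin N → ℂ := F.mulVec fun _ => 1
    let ct : Fin N → ℂ := vecMul (fun _ => 1) H
    IsUnit (1 + M) → IsUnit ((H * F)⁻¹ + G) →
    ∀ i j : ℕ,
      ct ⬝ᵥ ((Γ ^ j * (1 + M)⁻¹ * Γ ^ i).mulVec r)
        = ct ⬝ᵥ ((Γ ^ i * (1 + M)⁻¹ * Γ ^ j).mulVec r) := by
  intro Γ F H G M r ct _hM hA i j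
  have hρ : ∀ i, ρ i ≠ 0 := fun i h => hρc i (by simp [h])
  have hc : ∀ i, c i ≠ 0 := fun i h => hρc i (by simp [h])
  set A : Matrix (Fin N) (Fin N) ℂ := (H * F)⁻¹ + G with hAdef
  have hHFinv : (H * F)⁻¹ = Matrix.diagonal (fun i => (c i * ρ i)⁻¹) := by
    apply Matrix.inv_eq_right_inv
    show Matrix.diagonal c * Matrix.diagonal ρ * _ = 1
    rw [Matrix.diagonal_mul_diagonal, Matrix.diagonal_mul_diagonal]
    have : (fun i => c i * ρ i * (c i * ρ i)⁻¹) = fun _ => (1:ℂ) := by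
      funext i
      exact mul_inv_cancel₀ (by rw [mul_comm]; exact hρc i)
    rw [this, Matrix.diagonal_one]
  have hFinv : F⁻¹ = Matrix.diagonal (fun i => (ρ i)⁻¹) := by
    apply Matrix.inv_eq_right_inv
    show Matrix.diagonal ρ * _ = 1
    rw [Matrix.diagonal_mul_diagonal]
    have : (fun i => ρ i * (ρ i)⁻¹) = fun _ => (1:ℂ) := by
      funext i; exact mul_inv_cancel₀ (hρ i)
    rw [this, Matrix.diagonal_one]
  have hHinv : H⁻¹ = Matrix.diagonal (fun i => (c i)⁻¹) := by
    apply Matrix.inv_eq_right_inv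
    show Matrix.diagonal c * _ = 1
    rw [Matrix.diagonal_mul_diagonal]
    have : (fun i => c i * (c i)⁻¹) = fun _ => (1:ℂ) := by
      funext i; exact mul_inv_cancel₀ (hc i)
    rw [this, Matrix.diagonal_one]
  -- 1 + M = F * A * H
  have hfac : 1 + M = F * A * H := by
    have h1 : F * (H * F)⁻¹ * H = 1 := by
      rw [hHFinv]
      show Matrix.diagonal ρ * _ * Matrix.diagonal c = 1
      rw [Matrix.diagonal_mul_diagonal, Matrix.diagonal_mul_diagonal]
      have : (fun i => ρ i * (c i * ρ i)⁻¹ * c i) = fun _ => (1:ℂ) := by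
        funext i
        calc ρ i * (c i * ρ i)⁻¹ * c i = (c i * ρ i) * (c i * ρ i)⁻¹ := by ring
          _ = 1 := mul_inv_cancel₀ (by rw [mul_comm]; exact hρc i)
      rw [this, Matrix.diagonal_one]
    rw [hAdef, Matrix.mul_add, Matrix.add_mul, h1]
  have hinv : (1 + M)⁻¹ = H⁻¹ * A⁻¹ * F⁻¹ := by
    rw [hfac, Matrix.mul_inv_rev, Matrix.mul_inv_rev, Matrix.mul_assoc]
  -- key identity
  have key : ∀ n m : ℕ, H * (Γ ^ n * (1 + M)⁻¹ * Γ ^ m * F) = Γ ^ n * A⁻¹ * Γ ^ m := by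
    intro n m
    have hΓ : ∀ p : ℕ, Γ ^ p = Matrix.diagonal (fun i => k i ^ p) := by
      intro p; simp [Γ, Matrix.diagonal_pow]
    have hHΓ : H * Γ ^ n = Γ ^ n * H := by
      rw [hΓ]
      show Matrix.diagonal c * _ = _ * Matrix.diagonal c
      rw [Matrix.diagonal_mul_diagonal, Matrix.diagonal_mul_diagonal]
      exact congrArg _ (funext fun i => mul_comm _ _)
    have hΓF : Γ ^ m * F = F * Γ ^ m := by
      rw [hΓ]
      show _ * Matrix.diagonal ρ = Matrix.diagonal ρ * _
      rw [Matrix.diagonal_mul_diagonal, Matrix.diagonal_mul_diagonal]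
      exact congrArg _ (funext fun i => mul_comm _ _)
    have hHH : H * H⁻¹ = 1 := by
      rw [hHinv]
      show Matrix.diagonal c * _ = 1
      rw [Matrix.diagonal_mul_diagonal]
      have : (fun i => c i * (c i)⁻¹) = fun _ => (1:ℂ) := by funext i; exact mul_inv_cancel₀ (hc i)
      rw [this, Matrix.diagonal_one]
    have hFF : F⁻¹ * F = 1 := by
      rw [hFinv]
      show _ * Matrix.diagonal ρ = 1
      rw [Matrix.diagonal_mul_diagonal]
      have : (fun i => (ρ i)⁻¹ * ρ i) = fun _ => (1:ℂ) := by funext i; exact inv_mul_cancel₀ (hρ i)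
      rw [this, Matrix.diagonal_one]
    calc H * (Γ ^ n * (1 + M)⁻¹ * Γ ^ m * F)
        = H * (Γ ^ n * (H⁻¹ * A⁻¹ * F⁻¹) * (Γ ^ m * F)) := by rw [hinv]; noncomm_ring
      _ = (H * Γ ^ n) * (H⁻¹ * A⁻¹ * (F⁻¹ * F)) * Γ ^ m := by rw [hΓF]; noncomm_ring
      _ = Γ ^ n * ((H * H⁻¹) * A⁻¹ * (F⁻¹ * F)) * Γ ^ m := by rw [hHΓ]; noncomm_ring
      _ = Γ ^ n * A⁻¹ * Γ ^ m := by rw [hHH, hFF]; noncomm_ring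
  -- symmetry of A and A⁻¹
  have hAsym : Aᵀ = A := by
    rw [hAdef, Matrix.transpose_add, hHFinv, Matrix.diagonal_transpose]
    congr 1
    ext i j
    simp [G, Matrix.transpose_apply, add_comm]
  have hAinvSym : (A⁻¹)ᵀ = A⁻¹ := by
    rw [Matrix.transpose_nonsing_inv, hAsym]
  -- reduction to ones bilinear form
  have reduce : ∀ n m : ℕ,
      ct ⬝ᵥ ((Γ ^ n * (1 + M)⁻¹ * Γ ^ m).mulVec r)
        = (fun _ => (1:ℂ)) ⬝ᵥ ((Γ ^ n * A⁻¹ * Γ ^ m).mulVec fun _ => 1) := by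
    intro n m
    rw [← key n m]
    show vecMul (fun _ => 1) H ⬝ᵥ _ = _
    rw [show r = F.mulVec fun _ => 1 from rfl, Matrix.mulVec_mulVec,
      Matrix.dotProduct_mulVec, Matrix.vecMul_vecMul, ← Matrix.dotProduct_mulVec,
      ← Matrix.mul_assoc]
  rw [reduce, reduce]
  have hΓT : ∀ p : ℕ, (Γ ^ p)ᵀ = Γ ^ p := by
    intro p; rw [Matrix.transpose_pow]; simp [Γ]
  have trans : (Γ ^ i * A⁻¹ * Γ ^ j)ᵀ = Γ ^ j * A⁻¹ * Γ ^ i := by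
    rw [Matrix.transpose_mul, Matrix.transpose_mul, hAinvSym, hΓT, hΓT, Matrix.mul_assoc]
  rw [← trans]
  simp only [dotProduct, Matrix.mulVec, Matrix.transpose_apply, one_mul, mul_one]
  rw [Finset.sum_comm]
end

section
/- Let Γ be an N×N lower Jordan block Γ_J(k_1) with k_1 ≠ 0, F a lower triangular Toeplitz matrix, H the Hankel matrix with H_{ij} = c_{i+j-1} (i+j-1 ≤ N, else 0), G a symmetric matrix, and M = F G H, r = F e_1, c^T = e_1^T H. Assume I+M and HF and (HF)^{-1}+G are invertible. Then S^{(i,j)} := c^T Γ^j (I+M)^{-1} Γ^i r = e_1^T (Γ^T)^j ((HF)^{-1} + G)^{-1} Γ^i e_1, and consequently S^{(i,j)} = S^{(j,i)}. -/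
open Matrix

/-- A is an N×N lower triangular Toeplitz matrix. -/
def IsLTToeplitz {N : ℕ} (A : Matrix (Fin N) (Fin N) ℂ) : Prop :=
  ∃ a : ℕ → ℂ, ∀ i j : Fin N,
    A i j = if (j : ℕ) ≤ (i : ℕ) then a ((i : ℕ) - (j : ℕ)) else 0

namespace SJordanAux

variable {N : ℕ}

/-- The subdiagonal shift matrix. -/
def shiftM (N : ℕ) : Matrix (Fin N) (Fin N) ℂ :=
  Matrix.of fun i j => if (i : ℕ) = (j : ℕ) + 1 then 1 else 0

/-- The Hankel matrix. -/
def hankelM (N : ℕ) (cv : Fin N → ℂ) : Matrix (Fin N) (Fin N) ℂ :=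
  Matrix.of fun i j =>
    if h : (i : ℕ) + (j : ℕ) < N then cv ⟨(i : ℕ) + (j : ℕ), h⟩ else 0

lemma jordanBlock_eq (a : ℂ) :
    jordanBlock N a = a • (1 : Matrix (Fin N) (Fin N) ℂ) + shiftM N := by
  ext i j
  by_cases h : (i : ℕ) = (j : ℕ)
  · have hij : i = j := Fin.ext h
    subst hij
    simp [jordanBlock, shiftM, Matrix.one_apply]
  · have hij : i ≠ j := fun e => h (by rw [e])
    simp [jordanBlock, shiftM, Matrix.one_apply, h, hij]

lemma mul_shiftM (A : Matrix (Fin N) (Fin N) ℂ) (i j : Fin N) :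
    (A * shiftM N) i j = if h : (j : ℕ) + 1 < N then A i ⟨(j : ℕ) + 1, h⟩ else 0 := by
  rw [Matrix.mul_apply]
  split_ifs with h
  · rw [Finset.sum_eq_single (⟨(j : ℕ) + 1, h⟩ : Fin N)]
    · simp [shiftM]
    · intro k _ hk
      have : (k : ℕ) ≠ (j : ℕ) + 1 := by
        intro e; exact hk (Fin.ext e)
      simp [shiftM, this]
    · intro hk; exact absurd (Finset.mem_univ _) hk
  · apply Finset.sum_eq_zero
    intro k _
    have : (k : ℕ) ≠ (j : ℕ) + 1 := by omega
    simp [shiftM, this]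

lemma shiftM_mul (A : Matrix (Fin N) (Fin N) ℂ) (i j : Fin N) :
    (shiftM N * A) i j =
      if h : 0 < (i : ℕ) then
        A ⟨(i : ℕ) - 1, lt_of_le_of_lt (Nat.sub_le _ _) i.isLt⟩ j else 0 := by
  rw [Matrix.mul_apply]
  split_ifs with h
  · rw [Finset.sum_eq_single (⟨(i : ℕ) - 1, lt_of_le_of_lt (Nat.sub_le _ _) i.isLt⟩ : Fin N)]
    · have hcond : (i : ℕ) = ((i : ℕ) - 1) + 1 := by omega
      simp only [shiftM, Matrix.of_apply]
      rw [if_pos hcond, one_mul]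
    · intro k _ hk
      have : (i : ℕ) ≠ (k : ℕ) + 1 := by
        intro e
        apply hk; apply Fin.ext; simp; omega
      simp [shiftM, this]
    · intro hk; exact absurd (Finset.mem_univ _) hk
  · apply Finset.sum_eq_zero
    intro k _
    have : (i : ℕ) ≠ (k : ℕ) + 1 := by omega
    simp [shiftM, this]

lemma transpose_shiftM_mul (A : Matrix (Fin N) (Fin N) ℂ) (i j : Fin N) :
    ((shiftM N)ᵀ * A) i j =
      if h : (i : ℕ) + 1 < N then A ⟨(i : ℕ) + 1, h⟩ j else 0 := by
  rw [Matrix.mul_apply]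
  split_ifs with h
  · rw [Finset.sum_eq_single (⟨(i : ℕ) + 1, h⟩ : Fin N)]
    · simp [shiftM]
    · intro k _ hk
      have : (k : ℕ) ≠ (i : ℕ) + 1 := by
        intro e; exact hk (Fin.ext e)
      simp [shiftM, this]
    · intro hk; exact absurd (Finset.mem_univ _) hk
  · apply Finset.sum_eq_zero
    intro k _
    have : (k : ℕ) ≠ (i : ℕ) + 1 := by omega
    simp [shiftM, this]

lemma toeplitz_comm_shift (F : Matrix (Fin N) (Fin N) ℂ) (hF : IsLTToeplitz F) :
    F * shiftM N = shiftM N * F := by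
  obtain ⟨a, ha⟩ := hF
  ext i j
  rw [mul_shiftM, shiftM_mul]
  have hi := i.isLt
  have hj := j.isLt
  split_ifs with h1 h2 h2
  · rw [ha, ha]
    simp only []
    split_ifs with h3 h4 h4
    · congr 1; omega
    · omega
    · omega
    · rfl
  · rw [ha]
    have : ¬ (((j : ℕ) + 1) ≤ (i : ℕ)) := by omega
    simp [this]
  · rw [ha]
    have : ¬ ((j : ℕ) ≤ (i : ℕ) - 1) := by omega
    simp [this]
  · rfl

lemma hankel_comm_shift (cv : Fin N → ℂ) :
    hankelM N cv * shiftM N = (shiftM N)ᵀ * hankelM N cv := by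
  ext i j
  rw [mul_shiftM, transpose_shiftM_mul]
  have hi := i.isLt
  have hj := j.isLt
  split_ifs with h1 h2 h2
  · show hankelM N cv i ⟨(j : ℕ) + 1, h1⟩ = hankelM N cv ⟨(i : ℕ) + 1, h2⟩ j
    simp only [hankelM, Matrix.of_apply]
    split_ifs with h3 h4 h4
    · congr 1; apply Fin.ext; simp; omega
    · omega
    · omega
    · rfl
  · show hankelM N cv i ⟨(j : ℕ) + 1, h1⟩ = 0
    simp only [hankelM, Matrix.of_apply]
    have : ¬ ((i : ℕ) + ((j : ℕ) + 1) < N) := by omega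
    simp [this]
  · show (0 : ℂ) = hankelM N cv ⟨(i : ℕ) + 1, h2⟩ j
    simp only [hankelM, Matrix.of_apply]
    have : ¬ ((i : ℕ) + 1 + (j : ℕ) < N) := by omega
    simp [this]
  · rfl

lemma jordan_comm_toeplitz (a : ℂ) (F : Matrix (Fin N) (Fin N) ℂ) (hF : IsLTToeplitz F) :
    F * jordanBlock N a = jordanBlock N a * F := by
  rw [jordanBlock_eq, mul_add, add_mul, mul_smul_comm, smul_mul_assoc, mul_one, one_mul,
    toeplitz_comm_shift F hF]

lemma hankel_jordan (a : ℂ) (cv : Fin N → ℂ) :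
    hankelM N cv * jordanBlock N a = (jordanBlock N a)ᵀ * hankelM N cv := by
  rw [jordanBlock_eq, transpose_add, transpose_smul, transpose_one, mul_add, add_mul,
    mul_smul_comm, smul_mul_assoc, mul_one, one_mul, hankel_comm_shift]

lemma shift_sum (h : ℕ → ℂ) (d n : ℕ) (h0 : ∀ t, t < d → h t = 0)
    (hn : ∀ t, n ≤ t → h t = 0) :
    ∑ k ∈ Finset.range n, h (d + k) = ∑ t ∈ Finset.range n, h t := by
  have h1 : ∑ t ∈ Finset.Ico d (d + n), h t = ∑ t ∈ Finset.range (d + n), h t := by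
    apply Finset.sum_subset
    · intro x hx
      simp only [Finset.mem_Ico] at hx
      simp only [Finset.mem_range]; omega
    · intro x hx hnx
      simp only [Finset.mem_range] at hx
      simp only [Finset.mem_Ico] at hnx
      exact h0 x (by omega)
  have h2 : ∑ t ∈ Finset.range n, h t = ∑ t ∈ Finset.range (d + n), h t := by
    apply Finset.sum_subset
    · intro x hx
      simp only [Finset.mem_range] at *; omega
    · intro x hx hnx
      simp only [Finset.mem_range] at *
      exact hn x (by omega)
  rw [Finset.sum_Ico_eq_sum_range] at h1
  have : d + n - d = n := by omega
  rw [this] at h1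
  rw [h1, ← h2]

lemma hankel_mul_toeplitz (cv : Fin N → ℂ) (F : Matrix (Fin N) (Fin N) ℂ)
    (hF : IsLTToeplitz F) :
    hankelM N cv * F = Fᵀ * hankelM N cv := by
  obtain ⟨a, ha⟩ := hF
  ext i j
  rw [Matrix.mul_apply, Matrix.mul_apply]
  set h : ℕ → ℂ := fun t =>
    if ht : t < N then
      (if (i : ℕ) + (j : ℕ) ≤ t then cv ⟨t, ht⟩ * a (t - ((i : ℕ) + (j : ℕ))) else 0)
    else 0 with hdef
  have h0i : ∀ t, t < (i : ℕ) → h t = 0 := by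
    intro t ht
    simp only [hdef]
    by_cases h1 : t < N
    · rw [dif_pos h1, if_neg (by omega)]
    · rw [dif_neg h1]
  have h0j : ∀ t, t < (j : ℕ) → h t = 0 := by
    intro t ht
    simp only [hdef]
    by_cases h1 : t < N
    · rw [dif_pos h1, if_neg (by omega)]
    · rw [dif_neg h1]
  have hN : ∀ t, N ≤ t → h t = 0 := by
    intro t ht
    simp only [hdef]
    rw [dif_neg (by omega)]
  have lhs : ∑ k : Fin N, hankelM N cv i k * F k j
      = ∑ k ∈ Finset.range N, h ((i : ℕ) + k) := by
    rw [← Fin.sum_univ_eq_sum_range (fun k => h ((i : ℕ) + k)) N]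
    apply Finset.sum_congr rfl
    intro k _
    rw [ha]
    simp only [hankelM, Matrix.of_apply, hdef]
    have hk := k.isLt
    by_cases h1 : (i : ℕ) + (k : ℕ) < N
    · rw [dif_pos h1, dif_pos h1]
      by_cases h2 : (j : ℕ) ≤ (k : ℕ)
      · rw [if_pos h2, if_pos (by omega : (i : ℕ) + (j : ℕ) ≤ (i : ℕ) + (k : ℕ))]
        have e : (i : ℕ) + (k : ℕ) - ((i : ℕ) + (j : ℕ)) = (k : ℕ) - (j : ℕ) := by omega
        rw [e]
      · rw [if_neg h2, if_neg (by omega), mul_zero]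
    · rw [dif_neg h1, dif_neg h1, zero_mul]
  have rhs : ∑ k : Fin N, Fᵀ i k * hankelM N cv k j
      = ∑ k ∈ Finset.range N, h ((j : ℕ) + k) := by
    rw [← Fin.sum_univ_eq_sum_range (fun k => h ((j : ℕ) + k)) N]
    apply Finset.sum_congr rfl
    intro k _
    rw [Matrix.transpose_apply, ha]
    simp only [hankelM, Matrix.of_apply, hdef]
    have hk := k.isLt
    by_cases h1 : (k : ℕ) + (j : ℕ) < N
    · have h1' : (j : ℕ) + (k : ℕ) < N := by omega
      rw [dif_pos h1, dif_pos h1']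
      by_cases h2 : (i : ℕ) ≤ (k : ℕ)
      · rw [if_pos h2, if_pos (by omega : (i : ℕ) + (j : ℕ) ≤ (j : ℕ) + (k : ℕ)), mul_comm]
        congr 1
        · congr 1; apply Fin.ext; simp; omega
        · congr 1; omega
      · rw [if_neg h2, if_neg (by omega), zero_mul]
    · have h1' : ¬ (j : ℕ) + (k : ℕ) < N := by omega
      rw [dif_neg h1, dif_neg h1', mul_zero]
  rw [lhs, rhs, shift_sum h (i : ℕ) N h0i hN, shift_sum h (j : ℕ) N h0j hN]

lemma hankel_symm (cv : Fin N → ℂ) : (hankelM N cv)ᵀ = hankelM N cv := by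
  ext i j
  simp only [Matrix.transpose_apply, hankelM, Matrix.of_apply]
  split_ifs with h1 h2 h2
  · congr 1; apply Fin.ext; simp; omega
  · omega
  · omega
  · rfl

lemma hankel_jordan_pow (a : ℂ) (cv : Fin N → ℂ) (n : ℕ) :
    hankelM N cv * (jordanBlock N a) ^ n = ((jordanBlock N a)ᵀ) ^ n * hankelM N cv := by
  induction n with
  | zero => simp
  | succ n ih =>
    rw [pow_succ, pow_succ, ← Matrix.mul_assoc, ih, Matrix.mul_assoc, hankel_jordan,
      ← Matrix.mul_assoc]

lemma jordan_pow_comm_toeplitz (a : ℂ) (F : Matrix (Fin N) (Fin N) ℂ)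
    (hF : IsLTToeplitz F) (n : ℕ) :
    (jordanBlock N a) ^ n * F = F * (jordanBlock N a) ^ n := by
  induction n with
  | zero => simp
  | succ n ih =>
    rw [pow_succ, Matrix.mul_assoc, ← jordan_comm_toeplitz a F hF, ← Matrix.mul_assoc, ih,
      Matrix.mul_assoc]

lemma dot_self_transpose (A : Matrix (Fin N) (Fin N) ℂ) (v : Fin N → ℂ) :
    v ⬝ᵥ A.mulVec v = v ⬝ᵥ Aᵀ.mulVec v := by
  rw [Matrix.dotProduct_mulVec, dotProduct_comm, ← Matrix.mulVec_transpose]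

end SJordanAux

open SJordanAux in
/-- Symmetry S^{(i,j)} = S^{(j,i)} in the Jordan-block case:
S^{(i,j)} = e₁ᵀ (Γᵀ)ʲ ((HF)⁻¹+G)⁻¹ Γⁱ e₁, hence S^{(i,j)} = S^{(j,i)}. -/
theorem S_symmetric_jordan (N : ℕ) (k₁ : ℂ) (hk₁ : k₁ ≠ 0) (cv : Fin N → ℂ)
    (F G : Matrix (Fin N) (Fin N) ℂ)
    (hF : IsLTToeplitz F) (hG : Gᵀ = G) :
    let Γ : Matrix (Fin N) (Fin N) ℂ := jordanBlock N k₁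
    let H : Matrix (Fin N) (Fin N) ℂ :=
      Matrix.of fun i j =>
        if h : (i : ℕ) + (j : ℕ) < N then cv ⟨(i : ℕ) + (j : ℕ), h⟩ else 0
    let M : Matrix (Fin N) (Fin N) ℂ := F * G * H
    let e₁ : Fin N → ℂ := fun i => if (i : ℕ) = 0 then 1 else 0
    let r : Fin N → ℂ := F.mulVec e₁
    let ct : Fin N → ℂ := vecMul e₁ H
    IsUnit (1 + M) → IsUnit (H * F) → IsUnit ((H * F)⁻¹ + G) →
    ∀ i j : ℕ,
      (ct ⬝ᵥ ((Γ ^ j * (1 + M)⁻¹ * Γ ^ i).mulVec r)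
        = e₁ ⬝ᵥ (((Γᵀ) ^ j * ((H * F)⁻¹ + G)⁻¹ * Γ ^ i).mulVec e₁)) ∧
      ct ⬝ᵥ ((Γ ^ j * (1 + M)⁻¹ * Γ ^ i).mulVec r)
        = ct ⬝ᵥ ((Γ ^ i * (1 + M)⁻¹ * Γ ^ j).mulVec r) := by
  intro Γ H M e₁ r ct hM hHF hK i j
  have hHdef : H = hankelM N cv := rfl
  have hΓdef : Γ = jordanBlock N k₁ := rfl
  have hMdef : M = F * G * H := rfl
  have hrdef : r = F.mulVec e₁ := rfl
  have hctdef : ct = vecMul e₁ H := rfl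
  -- invertibility of H and F
  have hdet : IsUnit (H * F).det := (Matrix.isUnit_iff_isUnit_det _).mp hHF
  rw [Matrix.det_mul] at hdet
  have hHu : IsUnit H.det := isUnit_of_mul_isUnit_left hdet
  have hFu : IsUnit F.det := isUnit_of_mul_isUnit_right hdet
  have hMu : IsUnit (1 + M).det := (Matrix.isUnit_iff_isUnit_det _).mp hM
  -- key algebraic identity
  have e1 : F⁻¹ + G * H = F⁻¹ * (1 + M) := by
    rw [mul_add, mul_one, hMdef, ← Matrix.mul_assoc, ← Matrix.mul_assoc,
      Matrix.nonsing_inv_mul F hFu, one_mul]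
  have key : ((H * F)⁻¹ + G) * (H * ((1 + M)⁻¹ * F)) = 1 := by
    rw [Matrix.mul_inv_rev, add_mul, Matrix.mul_assoc F⁻¹ H⁻¹ _,
      ← Matrix.mul_assoc H⁻¹ H _, Matrix.nonsing_inv_mul H hHu, one_mul,
      ← Matrix.mul_assoc G H _, ← Matrix.mul_assoc F⁻¹ _ F,
      ← Matrix.mul_assoc (G * H) _ F, ← add_mul, ← add_mul, e1,
      Matrix.mul_assoc F⁻¹ (1 + M) _, Matrix.mul_nonsing_inv (1 + M) hMu, mul_one,
      Matrix.nonsing_inv_mul F hFu]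
  have hKinv : ((H * F)⁻¹ + G)⁻¹ = H * ((1 + M)⁻¹ * F) :=
    Matrix.inv_eq_right_inv key
  -- matrix identity
  have hmat : ∀ p q : ℕ, H * (Γ ^ q * (1 + M)⁻¹ * Γ ^ p) * F
      = Γᵀ ^ q * ((H * F)⁻¹ + G)⁻¹ * Γ ^ p := by
    intro p q
    rw [hKinv]
    have c1 : H * Γ ^ q = Γᵀ ^ q * H := by
      rw [hHdef, hΓdef]; exact hankel_jordan_pow k₁ cv q
    have c2 : Γ ^ p * F = F * Γ ^ p := by
      rw [hΓdef]; exact jordan_pow_comm_toeplitz k₁ F hF p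
    calc H * (Γ ^ q * (1 + M)⁻¹ * Γ ^ p) * F
        = (H * Γ ^ q) * ((1 + M)⁻¹ * (Γ ^ p * F)) := by simp only [Matrix.mul_assoc]
      _ = (Γᵀ ^ q * H) * ((1 + M)⁻¹ * (F * Γ ^ p)) := by rw [c1, c2]
      _ = Γᵀ ^ q * (H * ((1 + M)⁻¹ * F)) * Γ ^ p := by simp only [Matrix.mul_assoc]
  -- first claim
  have first : ∀ p q : ℕ, ct ⬝ᵥ ((Γ ^ q * (1 + M)⁻¹ * Γ ^ p).mulVec r)
      = e₁ ⬝ᵥ ((Γᵀ ^ q * ((H * F)⁻¹ + G)⁻¹ * Γ ^ p).mulVec e₁) := by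
    intro p q
    rw [hctdef, hrdef, ← Matrix.dotProduct_mulVec, Matrix.mulVec_mulVec,
      Matrix.mulVec_mulVec, ← hmat p q, Matrix.mul_assoc]
  refine ⟨first i j, ?_⟩
  -- symmetry of ((H*F)⁻¹+G)⁻¹
  have hHFsymm : (H * F)ᵀ = H * F := by
    rw [Matrix.transpose_mul, hHdef, hankel_symm, ← hankel_mul_toeplitz cv F hF]
  have hKsymm : (((H * F)⁻¹ + G)⁻¹)ᵀ = ((H * F)⁻¹ + G)⁻¹ := by
    rw [Matrix.transpose_nonsing_inv, Matrix.transpose_add,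
      Matrix.transpose_nonsing_inv, hHFsymm, hG]
  have second : e₁ ⬝ᵥ ((Γᵀ ^ j * ((H * F)⁻¹ + G)⁻¹ * Γ ^ i).mulVec e₁)
      = e₁ ⬝ᵥ ((Γᵀ ^ i * ((H * F)⁻¹ + G)⁻¹ * Γ ^ j).mulVec e₁) := by
    rw [dot_self_transpose]
    congr 1
    rw [Matrix.transpose_mul, Matrix.transpose_mul, Matrix.transpose_pow,
      Matrix.transpose_pow, Matrix.transpose_transpose, hKsymm, Matrix.mul_assoc,
      ← Matrix.mul_assoc]
  rw [first i j, first j i, second]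
end

section
/- Let Γ_J(k_1) be the N×N lower Jordan block and define ρ_1(n,m) = ((p+k_1)/(p-k_1))^n ((q+k_1)/(q-k_1))^m ρ_1^0 with p,q ≠ ±k_1. Define the vector r_J(n,m) = (ρ_1, ∂_{k_1}ρ_1/1!, ..., ∂^{N-1}_{k_1}ρ_1/(N-1)!)^T. Then (pI - Γ_J(k_1)) r_J(n+1,m) = (pI + Γ_J(k_1)) r_J(n,m). -/
/-!
On vectors of Taylor coefficients at `x`, the matrix `s • 1 + t • Γ_J(x)` acts as multiplication
by the affine function `s + t y`: by the Leibniz rule the `j`-th Taylor coefficient of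
`(s + t y) f` is `(s + t x) fⱼ + t fⱼ₋₁`, which is exactly row `j` of that matrix applied to
`(f₀, …, f_{N-1})`. Since `(p - y) ρ(n+1, m) = (p + y) ρ(n, m)` near `y = k₁`, the two sides of the
theorem are the Taylor vectors of one and the same function.
-/

open Matrix

open Topology

section TaylorCoeff

variable {𝕜 : Type*} [NontriviallyNormedField 𝕜]

noncomputable def taylorCoeff (f : 𝕜 → 𝕜) (x : 𝕜) (j : ℕ) : 𝕜 :=
  iteratedDeriv j f x / j.factorial

theorem Filter.EventuallyEq.taylorCoeff_eq {f g : 𝕜 → 𝕜} {x : 𝕜} (hfg : f =ᶠ[𝓝 x] g) (j : ℕ) :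
    taylorCoeff f x j = taylorCoeff g x j := by
  rw [taylorCoeff, taylorCoeff, hfg.iteratedDeriv_eq]

theorem iteratedDeriv_affine (a b x : 𝕜) (i : ℕ) :
    iteratedDeriv i (fun y => a + b * y) x =
      if i = 0 then a + b * x else if i = 1 then b else 0 := by
  rcases Nat.eq_zero_or_pos i with rfl | hi
  · simp
  · rw [iteratedDeriv_const_add hi, iteratedDeriv_const_mul_field, iteratedDeriv_fun_id]
    simp [hi.ne']

theorem iteratedDeriv_succ_affine_mul {f : 𝕜 → 𝕜} {x : 𝕜} {j : ℕ}
    (hf : ContDiffAt 𝕜 (j + 1) f x) (a b : 𝕜) :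
    iteratedDeriv (j + 1) (fun y => (a + b * y) * f y) x =
      (a + b * x) * iteratedDeriv (j + 1) f x + (j + 1) * b * iteratedDeriv j f x := by
  have haff : ContDiffAt 𝕜 (j + 1) (fun y => a + b * y) x := by fun_prop
  rw [iteratedDeriv_fun_mul haff hf, Finset.sum_range_succ', Finset.sum_range_succ',
    Finset.sum_eq_zero fun i _ => by simp [iteratedDeriv_affine]]
  simp only [zero_add, Nat.choose_one_right, Nat.cast_add, Nat.cast_one, iteratedDeriv_affine,
    one_ne_zero, ↓reduceIte, add_tsub_cancel_right, Nat.choose_zero_right, one_mul, tsub_zero]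
  ring

theorem taylorCoeff_affine_mul_zero (f : 𝕜 → 𝕜) (x a b : 𝕜) :
    taylorCoeff (fun y => (a + b * y) * f y) x 0 = (a + b * x) * taylorCoeff f x 0 := by
  simp [taylorCoeff]

variable [CharZero 𝕜]

theorem taylorCoeff_affine_mul_succ {f : 𝕜 → 𝕜} {x : 𝕜} {j : ℕ}
    (hf : ContDiffAt 𝕜 (j + 1) f x) (a b : 𝕜) :
    taylorCoeff (fun y => (a + b * y) * f y) x (j + 1) =
      (a + b * x) * taylorCoeff f x (j + 1) + b * taylorCoeff f x j := by
  simp only [taylorCoeff, iteratedDeriv_succ_affine_mul hf, Nat.factorial_succ, Nat.cast_mul]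
  have : (j.factorial : 𝕜) ≠ 0 := Nat.cast_ne_zero.mpr j.factorial_ne_zero
  field_simp
  push_cast
  ring

end TaylorCoeff

theorem jordanBlock_mulVec_apply {N : ℕ} (a : ℂ) (c : ℕ → ℂ) (i : Fin N) :
    (jordanBlock N a *ᵥ fun j : Fin N => c j) i =
      a * c i + if (i : ℕ) = 0 then 0 else c (i - 1) := by
  have h_split : ∀ j : Fin N, jordanBlock N a i j * c j =
      (if j = i then a * c j else 0) + if (i : ℕ) = j + 1 then c j else 0 := by
    intro j
    by_cases hij : j = i
    · subst hij; simp [jordanBlock]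
    · have : (i : ℕ) ≠ j := fun h => hij (Fin.ext h.symm)
      simp [jordanBlock, hij, this]
  simp only [mulVec, dotProduct, h_split, Finset.sum_add_distrib, Finset.sum_ite_eq',
    Finset.mem_univ, if_true]
  rw [Fin.sum_univ_eq_sum_range (fun j => if (i : ℕ) = j + 1 then c j else 0)]
  congr 1
  split_ifs with hi
  · simp [hi]
  · rw [Finset.sum_eq_single ((i : ℕ) - 1)] <;> grind

theorem smul_one_add_smul_jordanBlock_mulVec {N : ℕ} {a s t : ℂ} {c d : ℕ → ℂ}
    (h_zero : d 0 = (s + t * a) * c 0)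
    (h_succ : ∀ j, j + 1 < N → d (j + 1) = (s + t * a) * c (j + 1) + t * c j) :
    (s • (1 : Matrix (Fin N) (Fin N) ℂ) + t • jordanBlock N a) *ᵥ (fun i : Fin N => c i) =
      fun i : Fin N => d i := by
  funext i
  rw [add_mulVec, smul_mulVec, smul_mulVec, one_mulVec, Pi.add_apply, Pi.smul_apply,
    Pi.smul_apply, jordanBlock_mulVec_apply, smul_eq_mul, smul_eq_mul]
  obtain ⟨_ | j, hj⟩ := i
  · simp only [↓reduceIte, add_zero, h_zero]
    ring
  · simp only [Nat.add_eq_zero_iff, one_ne_zero, and_false, ↓reduceIte, add_tsub_cancel_right,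
      h_succ j hj]
    ring

theorem smul_one_add_smul_jordanBlock_mulVec_taylorCoeff {N : ℕ} {f : ℂ → ℂ} {x : ℂ}
    (hf : ContDiffAt ℂ N f x) (s t : ℂ) :
    (s • (1 : Matrix (Fin N) (Fin N) ℂ) + t • jordanBlock N x) *ᵥ
        (fun i : Fin N => taylorCoeff f x i) =
      fun i : Fin N => taylorCoeff (fun y => (s + t * y) * f y) x i :=
  smul_one_add_smul_jordanBlock_mulVec (taylorCoeff_affine_mul_zero f x s t)
    fun _ hj => taylorCoeff_affine_mul_succ (hf.of_le (by exact_mod_cast hj.le)) s t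

theorem plane_wave_shift_jordan_general (N : ℕ) (p q k₁ ρ0 : ℂ)
    (hp : p ≠ k₁) (hq : q ≠ k₁) :
    let ρ : ℕ → ℕ → ℂ → ℂ := fun n m x =>
      ((p + x) / (p - x)) ^ n * ((q + x) / (q - x)) ^ m * ρ0
    let rJ : ℕ → ℕ → Fin N → ℂ := fun n m j =>
      iteratedDeriv (j : ℕ) (ρ n m) k₁ / (Nat.factorial (j : ℕ) : ℂ)
    ∀ n m : ℕ,
      (p • (1 : Matrix (Fin N) (Fin N) ℂ) - jordanBlock N k₁).mulVec (rJ (n + 1) m)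
        = (p • (1 : Matrix (Fin N) (Fin N) ℂ) + jordanBlock N k₁).mulVec (rJ n m) := by
  intro ρ rJ n m
  have hpk : p - k₁ ≠ 0 := sub_ne_zero.mpr hp
  have hqk : q - k₁ ≠ 0 := sub_ne_zero.mpr hq
  have hρ : ∀ n m, ContDiffAt ℂ N (ρ n m) k₁ := fun n m => by
    fun_prop (disch := assumption)
  have h_shift : (fun y => (p + -1 * y) * ρ (n + 1) m y) =ᶠ[𝓝 k₁]
      fun y => (p + 1 * y) * ρ n m y := by
    filter_upwards [eventually_ne_nhds hp.symm] with y hy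
    have : p - y ≠ 0 := sub_ne_zero.mpr hy.symm
    simp only [ρ, pow_succ]
    field_simp
    ring
  have hL := smul_one_add_smul_jordanBlock_mulVec_taylorCoeff (hρ (n + 1) m) p (-1)
  have hR := smul_one_add_smul_jordanBlock_mulVec_taylorCoeff (hρ n m) p 1
  rw [neg_one_smul, ← sub_eq_add_neg] at hL
  rw [one_smul] at hR
  change _ *ᵥ (fun i : Fin N => taylorCoeff (ρ (n + 1) m) k₁ i) =
    _ *ᵥ (fun i : Fin N => taylorCoeff (ρ n m) k₁ i)
  rw [hL, hR]
  funext i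
  exact h_shift.taylorCoeff_eq i

/-- The Jordan-block plane wave vector r_J(n,m) whose entries are the Taylor
coefficients ∂ᵏ_{k₁}ρ₁/k! satisfies (pI - Γ_J(k₁)) r_J(n+1,m) = (pI + Γ_J(k₁)) r_J(n,m). -/
theorem plane_wave_shift_jordan (N : ℕ) (p q k₁ ρ0 : ℂ)
    (hp : p ≠ k₁) (hp' : p ≠ -k₁) (hq : q ≠ k₁) (hq' : q ≠ -k₁) :
    let ρ : ℕ → ℕ → ℂ → ℂ := fun n m x =>
      ((p + x) / (p - x)) ^ n * ((q + x) / (q - x)) ^ m * ρ0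
    let rJ : ℕ → ℕ → Fin N → ℂ := fun n m j =>
      iteratedDeriv (j : ℕ) (ρ n m) k₁ / (Nat.factorial (j : ℕ) : ℂ)
    ∀ n m : ℕ,
      (p • (1 : Matrix (Fin N) (Fin N) ℂ) - jordanBlock N k₁).mulVec (rJ (n + 1) m)
        = (p • (1 : Matrix (Fin N) (Fin N) ℂ) + jordanBlock N k₁).mulVec (rJ n m) :=
  plane_wave_shift_jordan_general N p q k₁ ρ0 hp hq
end

section
/- Let A be an N×N lower triangular Toeplitz matrix, and suppose (r, M) solve the system (pI-Γ)r̃ = (pI+Γ)r, (qI-Γ)r̂ = (qI+Γ)r, MΓ + ΓM = r c^T, where Γ = Γ_J(k_1) is a lower Jordan block. Then (Ar, AM) also solve this system with the same Γ and c^T. -/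
open Matrix

lemma toeplitz_comm_jordan {N : ℕ} {k₁ : ℂ} {A : Matrix (Fin N) (Fin N) ℂ}
    (hA : IsLTToeplitz A) : A * jordanBlock N k₁ = jordanBlock N k₁ * A := by
  obtain ⟨a, ha⟩ := hA
  ext i j
  simp only [Matrix.mul_apply, jordanBlock, Matrix.of_apply]
  have L : ∑ k : Fin N, A i k * (if (k : ℕ) = (j : ℕ) then k₁ else if (k : ℕ) = (j : ℕ) + 1 then 1 else 0)
      = k₁ * A i j + (if h : (j : ℕ) + 1 < N then A i ⟨(j : ℕ) + 1, h⟩ else 0) := by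
    by_cases h : (j : ℕ) + 1 < N
    · rw [dif_pos h]
      have : ∀ k : Fin N, A i k * (if (k : ℕ) = (j : ℕ) then k₁ else if (k : ℕ) = (j : ℕ) + 1 then 1 else 0)
          = (if k = j then k₁ * A i j else 0) + (if k = ⟨(j : ℕ) + 1, h⟩ then A i ⟨(j : ℕ) + 1, h⟩ else 0) := by
        intro k
        rcases eq_or_ne k j with rfl | hkj
        · simp [Fin.ext_iff, mul_comm]
        · rcases eq_or_ne k (⟨(j : ℕ) + 1, h⟩ : Fin N) with rfl | hk2
          · have h1 : (j : ℕ) + 1 ≠ (j : ℕ) := by omega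
            have hne : (⟨(j : ℕ) + 1, h⟩ : Fin N) ≠ j := by simp [Fin.ext_iff]
            simp [hne, h1]
          · have h1 : (k : ℕ) ≠ (j : ℕ) := fun hh => hkj (Fin.ext hh)
            have h2 : (k : ℕ) ≠ (j : ℕ) + 1 := fun hh => hk2 (Fin.ext hh)
            simp [h1, h2, hkj, hk2]
      rw [Finset.sum_congr rfl (fun k _ => this k), Finset.sum_add_distrib,
        Finset.sum_ite_eq' Finset.univ j, Finset.sum_ite_eq' Finset.univ (⟨(j : ℕ) + 1, h⟩ : Fin N)]
      simp
    · rw [dif_neg h]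
      have : ∀ k : Fin N, A i k * (if (k : ℕ) = (j : ℕ) then k₁ else if (k : ℕ) = (j : ℕ) + 1 then 1 else 0)
          = (if k = j then k₁ * A i j else 0) := by
        intro k
        rcases eq_or_ne k j with rfl | hkj
        · simp [mul_comm]
        · have h1 : (k : ℕ) ≠ (j : ℕ) := fun hh => hkj (Fin.ext hh)
          have h2 : (k : ℕ) ≠ (j : ℕ) + 1 := fun hh => h (hh ▸ k.isLt)
          simp [h1, h2, hkj]
      rw [Finset.sum_congr rfl (fun k _ => this k), Finset.sum_ite_eq' Finset.univ j]
      simp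
  have R : ∑ k : Fin N, (if (i : ℕ) = (k : ℕ) then k₁ else if (i : ℕ) = (k : ℕ) + 1 then 1 else 0) * A k j
      = k₁ * A i j + (if h : 0 < (i : ℕ) then A ⟨(i : ℕ) - 1, lt_of_le_of_lt (Nat.sub_le _ _) i.isLt⟩ j else 0) := by
    by_cases h : 0 < (i : ℕ)
    · rw [dif_pos h]
      set i' : Fin N := ⟨(i : ℕ) - 1, lt_of_le_of_lt (Nat.sub_le _ _) i.isLt⟩ with hi'
      have : ∀ k : Fin N, (if (i : ℕ) = (k : ℕ) then k₁ else if (i : ℕ) = (k : ℕ) + 1 then 1 else 0) * A k j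
          = (if k = i then k₁ * A i j else 0) + (if k = i' then A i' j else 0) := by
        intro k
        simp only [ha, hi', Fin.ext_iff, Fin.val_mk]
        have := i.isLt
        split_ifs <;> first
          | omega
          | (simp only [add_zero, zero_add, one_mul]
             congr 1 <;> first | rfl | omega | (congr 1 <;> omega))
          | simp
      rw [Finset.sum_congr rfl (fun k _ => this k), Finset.sum_add_distrib,
        Finset.sum_ite_eq' Finset.univ i, Finset.sum_ite_eq' Finset.univ i']
      simp
    · rw [dif_neg h]
      have hi0 : (i : ℕ) = 0 := by omega
      have : ∀ k : Fin N, (if (i : ℕ) = (k : ℕ) then k₁ else if (i : ℕ) = (k : ℕ) + 1 then 1 else 0) * A k j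
          = (if k = i then k₁ * A i j else 0) := by
        intro k
        rcases eq_or_ne k i with rfl | hki
        · simp
        · have h1 : (i : ℕ) ≠ (k : ℕ) := fun hh => hki (Fin.ext hh.symm)
          have h2 : (i : ℕ) ≠ (k : ℕ) + 1 := by omega
          simp [h1, h2, hki]
      rw [Finset.sum_congr rfl (fun k _ => this k), Finset.sum_ite_eq' Finset.univ i]
      simp
  rw [L, R]
  congr 1
  by_cases h1 : (j : ℕ) + 1 < N
  · by_cases h2 : 0 < (i : ℕ)
    · rw [dif_pos h1, dif_pos h2, ha, ha]
      simp only [Fin.val_mk]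
      split_ifs with c1 c2 c2 <;> try omega
      · congr 1; omega
      · rfl
    · rw [dif_pos h1, dif_neg h2, ha]
      have : ¬ ((j : ℕ) + 1 ≤ (i : ℕ)) := by omega
      simp [this]
  · by_cases h2 : 0 < (i : ℕ)
    · rw [dif_neg h1, dif_pos h2, ha]
      have hj : (j : ℕ) + 1 = N := by have := j.isLt; omega
      have : ¬ ((j : ℕ) ≤ (i : ℕ) - 1) := by have := i.isLt; omega
      simp [this]
    · rw [dif_neg h1, dif_neg h2]

lemma mul_vecMulVec {N : ℕ} (A : Matrix (Fin N) (Fin N) ℂ) (r c : Fin N → ℂ) :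
    A * vecMulVec r c = vecMulVec (A.mulVec r) c := by
  ext i j
  simp [Matrix.mul_apply, vecMulVec_apply, Matrix.mulVec, dotProduct, Finset.sum_mul, mul_assoc]

/-- If (r, M) solve the starting system with Γ a lower Jordan block, then for any
lower triangular Toeplitz matrix A, (A r, A M) also solve it with the same Γ, cᵀ. -/
theorem toeplitz_action_on_solutions (N : ℕ) (p q k₁ : ℂ)
    (A : Matrix (Fin N) (Fin N) ℂ) (hA : IsLTToeplitz A)
    (r : ℕ → ℕ → Fin N → ℂ) (M : ℕ → ℕ → Matrix (Fin N) (Fin N) ℂ) (c : Fin N → ℂ)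
    (hrp : ∀ n m, (p • (1 : Matrix (Fin N) (Fin N) ℂ) - jordanBlock N k₁).mulVec (r (n + 1) m)
        = (p • (1 : Matrix (Fin N) (Fin N) ℂ) + jordanBlock N k₁).mulVec (r n m))
    (hrq : ∀ n m, (q • (1 : Matrix (Fin N) (Fin N) ℂ) - jordanBlock N k₁).mulVec (r n (m + 1))
        = (q • (1 : Matrix (Fin N) (Fin N) ℂ) + jordanBlock N k₁).mulVec (r n m))
    (hM : ∀ n m, M n m * jordanBlock N k₁ + jordanBlock N k₁ * M n m
        = vecMulVec (r n m) c) :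
    (∀ n m, (p • (1 : Matrix (Fin N) (Fin N) ℂ) - jordanBlock N k₁).mulVec (A.mulVec (r (n + 1) m))
        = (p • (1 : Matrix (Fin N) (Fin N) ℂ) + jordanBlock N k₁).mulVec (A.mulVec (r n m))) ∧
    (∀ n m, (q • (1 : Matrix (Fin N) (Fin N) ℂ) - jordanBlock N k₁).mulVec (A.mulVec (r n (m + 1)))
        = (q • (1 : Matrix (Fin N) (Fin N) ℂ) + jordanBlock N k₁).mulVec (A.mulVec (r n m))) ∧
    (∀ n m, (A * M n m) * jordanBlock N k₁ + jordanBlock N k₁ * (A * M n m)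
        = vecMulVec (A.mulVec (r n m)) c) := by
  obtain h := toeplitz_comm_jordan hA
  have hcomm : ∀ s : ℂ, ∀ sg : Matrix (Fin N) (Fin N) ℂ → Matrix (Fin N) (Fin N) ℂ, True := fun _ _ => trivial
  have key : ∀ (s : ℂ) (B : Matrix (Fin N) (Fin N) ℂ),
      (B = s • 1 - jordanBlock N k₁ ∨ B = s • 1 + jordanBlock N k₁) → B * A = A * B := by
    rintro s B (rfl | rfl)
    · rw [Matrix.sub_mul, Matrix.mul_sub, Matrix.smul_mul, Matrix.mul_smul, one_mul, mul_one, h]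
    · rw [Matrix.add_mul, Matrix.mul_add, Matrix.smul_mul, Matrix.mul_smul, one_mul, mul_one, h]
  refine ⟨fun n m => ?_, fun n m => ?_, fun n m => ?_⟩
  · rw [Matrix.mulVec_mulVec, Matrix.mulVec_mulVec, key p _ (Or.inl rfl), key p _ (Or.inr rfl),
      ← Matrix.mulVec_mulVec, ← Matrix.mulVec_mulVec, hrp]
  · rw [Matrix.mulVec_mulVec, Matrix.mulVec_mulVec, key q _ (Or.inl rfl), key q _ (Or.inr rfl),
      ← Matrix.mulVec_mulVec, ← Matrix.mulVec_mulVec, hrq]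
  · rw [mul_assoc, ← mul_assoc (jordanBlock N k₁), ← h, mul_assoc, ← mul_add, hM,
      mul_vecMulVec]
end

section
/- Suppose scalar functions S^{(i,j)}(n,m) satisfy, for symmetric S^{(i,j)} = S^{(j,i)}, the four recurrence relations p S̃^{(i,j)} - S̃^{(i,j+1)} = p S^{(i,j)} + S^{(i+1,j)} - S̃^{(i,0)} S^{(0,j)}, p S^{(i,j)} + S^{(i,j+1)} = p S̃^{(i,j)} - S̃^{(i+1,j)} + S^{(i,0)} S̃^{(0,j)}, and the analogous relations with (q, ̂ ). Then w := S^{(0,0)} satisfies the lattice potential KdV equation (p+q+w-w̃̂)(p-q+ŵ-w̃) = p²-q², where tilde and hat denote shifts in n and m. -/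
/-- If the scalar functions S^{(i,j)}(n,m) are symmetric in (i,j) and satisfy the
four recurrence relations of the Cauchy matrix scheme, then w = S^{(0,0)}
satisfies the lattice potential KdV equation
(p+q+w-w̃̂)(p-q+ŵ-w̃) = p² - q². -/
theorem lpKdV_from_recurrences (p q : ℂ) (S : ℤ → ℤ → ℕ → ℕ → ℂ)
    (hsym : ∀ i j n m, S i j n m = S j i n m)
    (h1 : ∀ i j n m, p * S i j (n + 1) m - S i (j + 1) (n + 1) m
        = p * S i j n m + S (i + 1) j n m - S i 0 (n + 1) m * S 0 j n m)
    (h2 : ∀ i j n m, p * S i j n m + S i (j + 1) n m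
        = p * S i j (n + 1) m - S (i + 1) j (n + 1) m + S i 0 n m * S 0 j (n + 1) m)
    (h3 : ∀ i j n m, q * S i j n (m + 1) - S i (j + 1) n (m + 1)
        = q * S i j n m + S (i + 1) j n m - S i 0 n (m + 1) * S 0 j n m)
    (h4 : ∀ i j n m, q * S i j n m + S i (j + 1) n m
        = q * S i j n (m + 1) - S (i + 1) j n (m + 1) + S i 0 n m * S 0 j n (m + 1)) :
    let w : ℕ → ℕ → ℂ := fun n m => S 0 0 n m
    ∀ n m : ℕ,
      (p + q + w n m - w (n + 1) (m + 1)) * (p - q + w n (m + 1) - w (n + 1) m)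
        = p ^ 2 - q ^ 2 := by
  intro w n m
  have A := h1 0 0 n (m + 1)
  have B := h3 0 0 (n + 1) m
  have C := h1 0 0 n m
  have D := h3 0 0 n m
  simp only [w]
  linear_combination -A + B - C + D - hsym (0 + 1) 0 n (m + 1) + hsym (0 + 1) 0 (n + 1) m
end

section
/- Let M be an N×N matrix, r a column vector, c^T a row vector, Γ an N×N matrix, with I+M and aI+Γ, bI+Γ invertible, and suppose c^T (I+M)^{-1}(aI+Γ)^{-1} r = c^T (aI+Γ)^{-1}(I+M)^{-1} r for all a in a set containing a and b (symmetry of V), and S(a,b) := c^T (bI+Γ)^{-1}(I+M)^{-1}(aI+Γ)^{-1} r = S(b,a). If additionally the shifted quantities satisfy (pI-Γ)(I+M̃) = (I+M)(pI-Γ) + r c^T and (pI-Γ) r̃ = (pI+Γ) r, then 1 - (p+b) S̃(a,b) + (p-a) S(a,b) = Ṽ(a) V(b), where V(a) = 1 - c^T (I+M)^{-1}(aI+Γ)^{-1} r. -/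
/-!
Write `A = aI + Γ`, `B = bI + Γ` and `x = (I + M̃)⁻¹ A⁻¹ r̃`, so that `S̃(a,b) = cᵀ B⁻¹ x` and
`Ṽ(a) = 1 - cᵀ x`. Since `A⁻¹` commutes with `pI - Γ`, the exchange relation and
`(pI - Γ) r̃ = (pI + Γ) r` give `(I + M)(pI - Γ) x = A⁻¹ (pI + Γ) r - (cᵀ x) r`.
Writing `pI - Γ = (p + b)I - B`, `pI + Γ = (p - a)I + A` and pairing with `cᵀ B⁻¹ (I + M)⁻¹`
yields `(p + b) S̃ - (1 - Ṽ(a)) = (p - a) S + Ṽ(a) cᵀ B⁻¹ (I + M)⁻¹ r`, and the symmetry of `V`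
at `b` identifies the last pairing with `1 - V(b)`.
-/

namespace Matrix

variable {n R : Type*} [Fintype n] [DecidableEq n] [CommRing R]

theorem Commute.inv_left {A P : Matrix n n R} (h : Commute A P) : Commute A⁻¹ P := by
  simpa only [zpow_neg_one] using Matrix.Commute.zpow_left h (-1)

theorem inv_mul_smul_one_add_self {A : Matrix n n R} (hA : IsUnit A) (q : R) :
    A⁻¹ * (q • 1 + A) = q • A⁻¹ + 1 := by
  rw [mul_add, Matrix.mul_smul, mul_one, nonsing_inv_mul A ((isUnit_iff_isUnit_det A).mp hA)]

theorem inv_mul_smul_one_sub_self {A : Matrix n n R} (hA : IsUnit A) (q : R) :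
    A⁻¹ * (q • 1 - A) = q • A⁻¹ - 1 := by
  rw [mul_sub, Matrix.mul_smul, mul_one, nonsing_inv_mul A ((isUnit_iff_isUnit_det A).mp hA)]

theorem mul_mulVec_eq_of_exchange {M Mt P Q G : Matrix n n R} {r rt c x : n → R}
    (hG : Commute G P) (hexch : P * (1 + Mt) = (1 + M) * P + vecMulVec r c)
    (hr : P *ᵥ rt = Q *ᵥ r) (hx : (1 + Mt) *ᵥ x = G *ᵥ rt) :
    ((1 + M) * P) *ᵥ x = (G * Q) *ᵥ r - (c ⬝ᵥ x) • r := by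
  have hPx : (P * (1 + Mt)) *ᵥ x = (G * Q) *ᵥ r := by
    rw [← mulVec_mulVec, hx, mulVec_mulVec, ← hG.eq, ← mulVec_mulVec, hr, mulVec_mulVec]
  rw [← hPx, hexch, add_mulVec, vecMulVec_mulVec, op_smul_eq_smul, add_sub_cancel_right]

theorem dotProduct_eq_of_mul_mulVec_eq {A B K : Matrix n n R} (hA : IsUnit A) (hB : IsUnit B)
    (hK : IsUnit K) {c r x : n → R} {s q t : R}
    (h : (K * (s • 1 - B)) *ᵥ x = (A⁻¹ * (q • 1 + A)) *ᵥ r - t • r) :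
    s * (c ⬝ᵥ B⁻¹ *ᵥ x) - c ⬝ᵥ x
      = q * (c ⬝ᵥ (B⁻¹ * K⁻¹ * A⁻¹) *ᵥ r) + (1 - t) * (c ⬝ᵥ (B⁻¹ * K⁻¹) *ᵥ r) := by
  have h' := congrArg (fun v => c ⬝ᵥ (B⁻¹ * K⁻¹) *ᵥ v) h
  simp only [mulVec_mulVec, mulVec_sub, mulVec_smul, ← mul_assoc] at h'
  rw [mul_assoc (B⁻¹ * K⁻¹), mul_assoc B⁻¹,
    nonsing_inv_mul_cancel_left K _ ((isUnit_iff_isUnit_det K).mp hK),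
    inv_mul_smul_one_sub_self hB, mul_assoc _ A⁻¹, inv_mul_smul_one_add_self hA] at h'
  simp only [sub_mulVec, add_mulVec, smul_mulVec, one_mulVec, mul_add, Matrix.mul_smul, mul_one,
    dotProduct_sub, dotProduct_add, dotProduct_smul, smul_eq_mul] at h'
  linear_combination h'

end Matrix

open Matrix

theorem Sab_shift_relation_general (N : ℕ) (p a b : ℂ)
    (Γ M Mt : Matrix (Fin N) (Fin N) ℂ) (r rt c : Fin N → ℂ)
    (hM : IsUnit (1 + M)) (hMt : IsUnit (1 + Mt))
    (ha : IsUnit (a • (1 : Matrix (Fin N) (Fin N) ℂ) + Γ))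
    (hb : IsUnit (b • (1 : Matrix (Fin N) (Fin N) ℂ) + Γ))
    -- symmetry of V: (I+M)⁻¹ and (xI+Γ)⁻¹ may be exchanged under cᵀ · r, for x = a, b
    (hVsym : ∀ x ∈ ({a, b} : Set ℂ),
      c ⬝ᵥ (((1 + M)⁻¹ * (x • (1 : Matrix (Fin N) (Fin N) ℂ) + Γ)⁻¹).mulVec r)
        = c ⬝ᵥ (((x • (1 : Matrix (Fin N) (Fin N) ℂ) + Γ)⁻¹ * (1 + M)⁻¹).mulVec r))
    (hexch : (p • (1 : Matrix (Fin N) (Fin N) ℂ) - Γ) * (1 + Mt)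
        = (1 + M) * (p • (1 : Matrix (Fin N) (Fin N) ℂ) - Γ) + vecMulVec r c)
    (hr : (p • (1 : Matrix (Fin N) (Fin N) ℂ) - Γ).mulVec rt
        = (p • (1 : Matrix (Fin N) (Fin N) ℂ) + Γ).mulVec r) :
    let S : Matrix (Fin N) (Fin N) ℂ → (Fin N → ℂ) → ℂ := fun X y =>
      c ⬝ᵥ (((b • (1 : Matrix (Fin N) (Fin N) ℂ) + Γ)⁻¹ * (1 + X)⁻¹
          * (a • (1 : Matrix (Fin N) (Fin N) ℂ) + Γ)⁻¹).mulVec y)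
    let V : ℂ → Matrix (Fin N) (Fin N) ℂ → (Fin N → ℂ) → ℂ := fun x X y =>
      1 - c ⬝ᵥ (((1 + X)⁻¹ * (x • (1 : Matrix (Fin N) (Fin N) ℂ) + Γ)⁻¹).mulVec y)
    1 - (p + b) * S Mt rt + (p - a) * S M r = V a Mt rt * V b M r := by
  intro S V
  set A : Matrix (Fin N) (Fin N) ℂ := a • 1 + Γ
  set B : Matrix (Fin N) (Fin N) ℂ := b • 1 + Γ
  set x := ((1 + Mt)⁻¹ * A⁻¹) *ᵥ rt
  have hx : (1 + Mt) *ᵥ x = A⁻¹ *ᵥ rt := by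
    rw [mulVec_mulVec, ← mul_assoc, mul_nonsing_inv _ ((isUnit_iff_isUnit_det _).mp hMt), one_mul]
  have hcomm : Commute A⁻¹ (p • 1 - Γ) := Matrix.Commute.inv_left <|
    ((Commute.one_left _).smul_left a).add_left
      (((Commute.one_right Γ).smul_right p).sub_right (Commute.refl Γ))
  have key := mul_mulVec_eq_of_exchange hcomm hexch hr hx
  rw [show p • 1 - Γ = (p + b) • 1 - B by simp only [B, add_smul]; abel,
    show p • 1 + Γ = (p - a) • 1 + A by simp only [A, sub_smul]; abel] at key
  have hscalar := dotProduct_eq_of_mul_mulVec_eq (c := c) ha hb hM key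
  have hVb : V b M r = 1 - c ⬝ᵥ (B⁻¹ * (1 + M)⁻¹) *ᵥ r := by
    rw [← hVsym b (by simp)]
  have hSt : S Mt rt = c ⬝ᵥ B⁻¹ *ᵥ x := by
    simp only [S, x, mulVec_mulVec, mul_assoc]
    rfl
  rw [hSt, hVb]
  linear_combination -hscalar

/-- The shift relation 1 - (p+b) S̃(a,b) + (p-a) S(a,b) = Ṽ(a) V(b) for
S(a,b) = cᵀ (bI+Γ)⁻¹ (I+M)⁻¹ (aI+Γ)⁻¹ r and V(a) = 1 - cᵀ (I+M)⁻¹ (aI+Γ)⁻¹ r. -/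
theorem Sab_shift_relation (N : ℕ) (p a b : ℂ)
    (Γ M Mt : Matrix (Fin N) (Fin N) ℂ) (r rt c : Fin N → ℂ)
    (hM : IsUnit (1 + M)) (hMt : IsUnit (1 + Mt))
    (ha : IsUnit (a • (1 : Matrix (Fin N) (Fin N) ℂ) + Γ))
    (hb : IsUnit (b • (1 : Matrix (Fin N) (Fin N) ℂ) + Γ))
    (hpm : IsUnit (p • (1 : Matrix (Fin N) (Fin N) ℂ) - Γ))
    (hpp : IsUnit (p • (1 : Matrix (Fin N) (Fin N) ℂ) + Γ))
    -- symmetry of V: (I+M)⁻¹ and (xI+Γ)⁻¹ may be exchanged under cᵀ · r, for x = a, b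
    (hVsym : ∀ x ∈ ({a, b} : Set ℂ),
      c ⬝ᵥ (((1 + M)⁻¹ * (x • (1 : Matrix (Fin N) (Fin N) ℂ) + Γ)⁻¹).mulVec r)
        = c ⬝ᵥ (((x • (1 : Matrix (Fin N) (Fin N) ℂ) + Γ)⁻¹ * (1 + M)⁻¹).mulVec r))
    -- symmetry of S: S(a,b) = S(b,a)
    (hSsym :
      c ⬝ᵥ (((b • (1 : Matrix (Fin N) (Fin N) ℂ) + Γ)⁻¹ * (1 + M)⁻¹
          * (a • (1 : Matrix (Fin N) (Fin N) ℂ) + Γ)⁻¹).mulVec r)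
        = c ⬝ᵥ (((a • (1 : Matrix (Fin N) (Fin N) ℂ) + Γ)⁻¹ * (1 + M)⁻¹
          * (b • (1 : Matrix (Fin N) (Fin N) ℂ) + Γ)⁻¹).mulVec r))
    (hexch : (p • (1 : Matrix (Fin N) (Fin N) ℂ) - Γ) * (1 + Mt)
        = (1 + M) * (p • (1 : Matrix (Fin N) (Fin N) ℂ) - Γ) + vecMulVec r c)
    (hr : (p • (1 : Matrix (Fin N) (Fin N) ℂ) - Γ).mulVec rt
        = (p • (1 : Matrix (Fin N) (Fin N) ℂ) + Γ).mulVec r) :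
    let S : Matrix (Fin N) (Fin N) ℂ → (Fin N → ℂ) → ℂ := fun X y =>
      c ⬝ᵥ (((b • (1 : Matrix (Fin N) (Fin N) ℂ) + Γ)⁻¹ * (1 + X)⁻¹
          * (a • (1 : Matrix (Fin N) (Fin N) ℂ) + Γ)⁻¹).mulVec y)
    let V : ℂ → Matrix (Fin N) (Fin N) ℂ → (Fin N → ℂ) → ℂ := fun x X y =>
      1 - c ⬝ᵥ (((1 + X)⁻¹ * (x • (1 : Matrix (Fin N) (Fin N) ℂ) + Γ)⁻¹).mulVec y)
    1 - (p + b) * S Mt rt + (p - a) * S M r = V a Mt rt * V b M r :=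
  Sab_shift_relation_general N p a b Γ M Mt r rt c hM hMt ha hb hVsym hexch hr
end
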